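/- Let A ∈ GL(d, ℝ) be expansive with dilated cubes 𝒟_A = {A^i([0,1]^d+k) : i ∈ ℤ, k ∈ ℤ^d} and tents 𝒯(D') = {D ∈ 𝒟_A : m(D ∩ D') > 0, scale(D) ≤ scale(D')}. For a complex sequence c = (c_D)_{D∈𝒟_A} define ‖c‖ = sup_{D'∈𝒟_A} (1/m(D')) ∫_{D'} ∑_{D: scale(D) ≤ scale(D')} m(D)^{−1/2} |c_D| 𝟙_D(x) dx. Then ‖c‖ ≍ sup_{D'∈𝒟_A} (1/m(D')) ∑_{D ∈ 𝒯(D')} m(D)^{1/2} |c_D|, with implicit constants independent of c. -/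

import Mathlib

open MeasureTheory
open scoped Pointwise ENNReal Classical

/-- A real matrix is expansive if it is invertible and all its complex eigenvalues
have absolute value strictly greater than `1`. -/
def Expansive {d : ℕ} (A : Matrix (Fin d) (Fin d) ℝ) : Prop :=
  IsUnit A ∧ ∀ μ ∈ spectrum ℂ (A.map (algebraMap ℝ ℂ)), 1 < ‖μ‖

/-- The action of a matrix on Euclidean space. -/
def ms {d : ℕ} (A : Matrix (Fin d) (Fin d) ℝ) (x : EuclideanSpace ℝ (Fin d)) :
    EuclideanSpace ℝ (Fin d) := WithLp.toLp 2 (A.mulVec x)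

/-- The integer vector `n` regarded as a point of Euclidean space. -/
def zvec {d : ℕ} (n : Fin d → ℤ) : EuclideanSpace ℝ (Fin d) := WithLp.toLp 2 (fun t => (n t : ℝ))

/-- The dilated cube `A^i ([0,1]^d + k)`. -/
def dcube {d : ℕ} (A : Matrix (Fin d) (Fin d) ℝ) (i : ℤ) (k : Fin d → ℤ) :
    Set (EuclideanSpace ℝ (Fin d)) :=
  ms (A ^ i) '' {x | ∀ t, (k t : ℝ) ≤ x t ∧ x t ≤ (k t : ℝ) + 1}

/-- The `f⁰_{∞,1}(A)` sequence norm: `sup_{D'} m(D')⁻¹ ∫_{D'} ∑_{scale(D) ≤ scale(D')}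
m(D)^{-1/2} |c_D| 𝟙_D`. -/
noncomputable def fNormInfOne {d : ℕ} (A : Matrix (Fin d) (Fin d) ℝ)
    (c : ℤ → (Fin d → ℤ) → ℂ) : ℝ≥0∞ :=
  ⨆ (j : ℤ) (l : Fin d → ℤ),
    (volume (dcube A j l))⁻¹ *
      ∫⁻ x in dcube A j l,
        ∑' (i : ℤ) (k : Fin d → ℤ),
          (if i ≤ j then
            (dcube A i k).indicator
              (fun _ => volume (dcube A i k) ^ (-(1 / 2 : ℝ)) *
                ENNReal.ofReal (‖c i k‖)) x
          else 0)

/-- The tent form of the `f⁰_{∞,1}(A)` sequence norm: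
`sup_{D'} m(D')⁻¹ ∑_{D ∈ 𝒯(D')} m(D)^{1/2} |c_D|`. -/
noncomputable def tentNorm {d : ℕ} (A : Matrix (Fin d) (Fin d) ℝ)
    (c : ℤ → (Fin d → ℤ) → ℂ) : ℝ≥0∞ :=
  ⨆ (j : ℤ) (l : Fin d → ℤ),
    (volume (dcube A j l))⁻¹ *
      ∑' (i : ℤ) (k : Fin d → ℤ),
        (if i ≤ j ∧ 0 < volume (dcube A i k ∩ dcube A j l) then
          volume (dcube A i k) ^ (1 / 2 : ℝ) * ENNReal.ofReal (‖c i k‖)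
        else 0)

/-!
Integrating the indicator sum over `D' = A^j([0,1]^d + l)` gives
`∑_{scale D ≤ j} m(D)^{-1/2} |c_D| m(D ∩ D')`. As `m(D ∩ D') ≤ m(D)` and the term vanishes unless
`D ∈ 𝒯(D')`, this is at most the tent sum of `D'`: the first inequality holds with constant `1`.

Conversely, the spectral radius of `A⁻¹` is `< 1`, so by Gelfand's formula the powers `A^m`,
`m ≤ 0`, are uniformly bounded. Hence a cube `D` of scale `i ≤ j` meeting `D'` is covered by the
translates `A^j([0,1]^d + l + n)` with `n` in a fixed box `|n|_∞ ≤ N`, so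
`m(D) ≤ ∑_n m(D ∩ A^j([0,1]^d + l + n))`. Summing over the tent bounds the tent sum of `D'` by the
sum of the local integrals over these translates, each at most `m(D') ‖c‖`.
-/

open scoped NNReal
open Filter

attribute [local instance] Matrix.linftyOpNormedAddCommGroup Matrix.linftyOpNormedRing
  Matrix.linftyOpNormedAlgebra

theorem spectralRadius_inv_lt_one {𝒜 : Type*} [NormedRing 𝒜] [NormedAlgebra ℂ 𝒜]
    [CompleteSpace 𝒜] (u : 𝒜ˣ) (hu : ∀ μ ∈ spectrum ℂ (u : 𝒜), 1 < ‖μ‖) :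
    spectralRadius ℂ (↑u⁻¹ : 𝒜) < 1 := by
  rcases (spectrum ℂ (↑u⁻¹ : 𝒜)).eq_empty_or_nonempty with h | h
  · simp [spectralRadius, h]
  · rw [← ENNReal.coe_one]
    refine spectrum.spectralRadius_lt_of_forall_lt_of_nonempty h fun μ hμ => ?_
    rw [← spectrum.map_inv, Set.mem_inv] at hμ
    have hμ_inv := hu _ hμ
    rw [norm_inv] at hμ_inv
    exact_mod_cast (one_lt_inv_iff₀.mp hμ_inv).2

theorem exists_nnnorm_pow_le_of_spectralRadius_lt_one {𝒜 : Type*} [NormedRing 𝒜]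
    [NormedAlgebra ℂ 𝒜] [CompleteSpace 𝒜] {a : 𝒜} (ha : spectralRadius ℂ a < 1) :
    ∃ C : ℝ≥0, ∀ n : ℕ, ‖a ^ n‖₊ ≤ C := by
  have hev : ∀ᶠ n : ℕ in atTop, ‖a ^ n‖₊ ≤ 1 := by
    filter_upwards [(spectrum.pow_nnnorm_pow_one_div_tendsto_nhds_spectralRadius a)
      |>.eventually_lt_const ha] with n hn
    contrapose! hn
    calc (1 : ℝ≥0∞) = 1 ^ (1 / n : ℝ) := (ENNReal.one_rpow _).symm
      _ ≤ (‖a ^ n‖₊ : ℝ≥0∞) ^ (1 / n : ℝ) :=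
        ENNReal.rpow_le_rpow (by exact_mod_cast hn.le) (by positivity)
  obtain ⟨C, hC⟩ := (isBoundedUnder_of_eventually_le hev).bddAbove_range
  exact ⟨C, fun n => hC ⟨n, rfl⟩⟩

theorem Matrix.linfty_opNNNorm_map_algebraMap {m n : Type*} [Fintype m] [Fintype n]
    (M : Matrix m n ℝ) : ‖M.map (algebraMap ℝ ℂ)‖₊ = ‖M‖₊ := by
  simp [Matrix.linfty_opNNNorm_def]

theorem Expansive.isUnit_det {d : ℕ} {A : Matrix (Fin d) (Fin d) ℝ} (hA : Expansive A) :
    IsUnit A.det :=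
  (Matrix.isUnit_iff_isUnit_det A).mp hA.1

theorem Expansive.exists_nnnorm_zpow_le {d : ℕ} {A : Matrix (Fin d) (Fin d) ℝ}
    (hA : Expansive A) : ∃ C : ℝ≥0, ∀ m : ℤ, m ≤ 0 → ‖A ^ m‖₊ ≤ C := by
  obtain ⟨⟨u, rfl⟩, hspec⟩ := hA
  let U := Units.map (RingHom.mapMatrix (m := Fin d) (algebraMap ℝ ℂ)).toMonoidHom u
  obtain ⟨C, hC⟩ :=
    exists_nnnorm_pow_le_of_spectralRadius_lt_one (spectralRadius_inv_lt_one U hspec)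
  refine ⟨C, fun m hm => ?_⟩
  obtain ⟨s, rfl⟩ : ∃ s : ℕ, m = -s := ⟨m.natAbs, by omega⟩
  have hmap : ((u : Matrix (Fin d) (Fin d) ℝ) ^ (-(s : ℤ))).map (algebraMap ℝ ℂ) =
      (↑U⁻¹) ^ s := by
    rw [Matrix.zpow_neg_natCast, ← Matrix.inv_pow', ← Matrix.coe_units_inv, ← map_inv,
      Units.coe_map, ← map_pow]
    rfl
  rw [← Matrix.linfty_opNNNorm_map_algebraMap, hmap]
  exact hC s

section DilatedCubes

variable {d : ℕ}

def unitCube (k : Fin d → ℤ) : Set (EuclideanSpace ℝ (Fin d)) :=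
  {x | ∀ t, (k t : ℝ) ≤ x t ∧ x t ≤ (k t : ℝ) + 1}

theorem unitCube_eq_preimage (k : Fin d → ℤ) :
    unitCube k = (MeasurableEquiv.toLp 2 (Fin d → ℝ)).symm ⁻¹'
      Set.univ.pi fun t => Set.Icc (k t : ℝ) (k t + 1) := by
  ext x
  simp only [unitCube, Set.mem_ofPred_eq, Set.mem_preimage, Set.mem_univ_pi, Set.mem_Icc]
  rfl

theorem isCompact_unitCube (k : Fin d → ℤ) : IsCompact (unitCube k) := by
  rw [unitCube_eq_preimage]
  exact (EuclideanSpace.equiv (Fin d) ℝ).toHomeomorph.isCompact_preimage.mpr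
    (isCompact_univ_pi fun _ => isCompact_Icc)

theorem volume_unitCube (k : Fin d → ℤ) : volume (unitCube k) = 1 := by
  rw [unitCube_eq_preimage,
    (EuclideanSpace.volume_preserving_symm_measurableEquiv_toLp (Fin d)).measure_preimage
      (MeasurableSet.univ_pi fun _ => measurableSet_Icc).nullMeasurableSet, volume_pi_pi]
  simp [Real.volume_Icc]

theorem floor_mem_unitCube (x : EuclideanSpace ℝ (Fin d)) :
    x ∈ unitCube (fun t => ⌊x t⌋) :=
  fun _ => ⟨Int.floor_le _, (Int.lt_floor_add_one _).le⟩

theorem abs_sub_le_one_of_mem_unitCube {k : Fin d → ℤ} {u v : EuclideanSpace ℝ (Fin d)}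
    (hu : u ∈ unitCube k) (hv : v ∈ unitCube k) (t : Fin d) : |u t - v t| ≤ 1 := by
  have := hu t
  have := hv t
  rw [abs_le]
  constructor <;> linarith

theorem dcube_eq_image (A : Matrix (Fin d) (Fin d) ℝ) (i : ℤ) (k : Fin d → ℤ) :
    dcube A i k = Matrix.toLpLin 2 2 (A ^ i) '' unitCube k := rfl

theorem volume_dcube (A : Matrix (Fin d) (Fin d) ℝ) (i : ℤ) (k : Fin d → ℤ) :
    volume (dcube A i k) = ENNReal.ofReal |(A ^ i).det| := by
  rw [dcube_eq_image, Measure.addHaar_image_linearMap, Matrix.toLpLin_eq_toLin,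
    LinearMap.det_toLin, volume_unitCube, mul_one]

theorem volume_dcube_ne_top (A : Matrix (Fin d) (Fin d) ℝ) (i : ℤ) (k : Fin d → ℤ) :
    volume (dcube A i k) ≠ ⊤ := by
  simp [volume_dcube]

theorem volume_dcube_pos {A : Matrix (Fin d) (Fin d) ℝ} (hA : IsUnit A.det) (i : ℤ)
    (k : Fin d → ℤ) : 0 < volume (dcube A i k) := by
  simpa [volume_dcube] using (hA.det_zpow i).ne_zero

theorem volume_dcube_translate (A : Matrix (Fin d) (Fin d) ℝ) (i : ℤ) (k k' : Fin d → ℤ) :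
    volume (dcube A i k) = volume (dcube A i k') := by
  rw [volume_dcube, volume_dcube]

theorem measurableSet_dcube (A : Matrix (Fin d) (Fin d) ℝ) (i : ℤ) (k : Fin d → ℤ) :
    MeasurableSet (dcube A i k) := by
  rw [dcube_eq_image]
  exact ((isCompact_unitCube k).image
    (LinearMap.continuous_of_finiteDimensional _)).isClosed.measurableSet

theorem ms_ms (M N : Matrix (Fin d) (Fin d) ℝ) (x : EuclideanSpace ℝ (Fin d)) :
    ms M (ms N x) = ms (M * N) x :=
  congrArg (WithLp.toLp 2) (Matrix.mulVec_mulVec _ M N)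

theorem ms_zpow_ms_zpow {A : Matrix (Fin d) (Fin d) ℝ} (hA : IsUnit A.det) (i j : ℤ)
    (x : EuclideanSpace ℝ (Fin d)) : ms (A ^ i) (ms (A ^ j) x) = ms (A ^ (i + j)) x := by
  rw [ms_ms, Matrix.zpow_add hA]

theorem mem_dcube_iff {A : Matrix (Fin d) (Fin d) ℝ} (hA : IsUnit A.det) {i : ℤ}
    {k : Fin d → ℤ} {x : EuclideanSpace ℝ (Fin d)} :
    x ∈ dcube A i k ↔ ms (A ^ (-i)) x ∈ unitCube k := by
  constructor
  · rintro ⟨y, hy, rfl⟩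
    rwa [ms_zpow_ms_zpow hA, neg_add_cancel, zpow_zero, ms, Matrix.one_mulVec]
  · intro h
    refine ⟨_, h, ?_⟩
    rw [ms_zpow_ms_zpow hA, add_neg_cancel, zpow_zero, ms, Matrix.one_mulVec]

end DilatedCubes

theorem abs_mulVec_apply_le {m n : Type*} [Fintype m] [Fintype n] (M : Matrix m n ℝ)
    {v : n → ℝ} (hv : ∀ t, |v t| ≤ 1) (s : m) : |M.mulVec v s| ≤ ‖M‖ :=
  calc |M.mulVec v s| = ‖M.mulVec v s‖ := (Real.norm_eq_abs _).symm
    _ ≤ ‖M.mulVec v‖ := norm_le_pi_norm _ s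
    _ ≤ ‖M‖ * ‖v‖ := Matrix.linfty_opNorm_mulVec M v
    _ ≤ ‖M‖ :=
      mul_le_of_le_one_right (norm_nonneg _) ((pi_norm_le_iff_of_nonneg zero_le_one).mpr hv)

theorem floor_sub_mem_Icc_of_abs_sub_le {a b : ℝ} {l : ℤ} {N : ℕ} (hlb : (l : ℝ) ≤ b)
    (hbl : b ≤ l + 1) (hab : |a - b| ≤ N) :
    ⌊a⌋ - l ∈ Finset.Icc (-((N + 1 : ℕ) : ℤ)) (N + 1 : ℕ) := by
  rw [abs_le] at hab
  have h1 : ((l - (N + 1) : ℤ) : ℝ) ≤ a := by push_cast; linarith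
  have h2 : a < ((l + (N + 1) + 1 : ℤ) : ℝ) := by push_cast; linarith
  have := Int.le_floor.mpr h1
  have := Int.floor_lt.mpr h2
  rw [Finset.mem_Icc]
  omega

noncomputable def box (d N : ℕ) : Finset (Fin d → ℤ) :=
  Fintype.piFinset fun _ => Finset.Icc (-(N : ℤ)) N

theorem zero_mem_box (d N : ℕ) : 0 ∈ box d N := by
  simp [box]

def IsTentCover {d : ℕ} (A : Matrix (Fin d) (Fin d) ℝ) (F : Finset (Fin d → ℤ)) : Prop :=
  ∀ ⦃i j : ℤ⦄ ⦃k l : Fin d → ℤ⦄, i ≤ j → (dcube A i k ∩ dcube A j l).Nonempty →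
    dcube A i k ⊆ ⋃ n ∈ F, dcube A j (l + n)

theorem Expansive.exists_isTentCover_box {d : ℕ} {A : Matrix (Fin d) (Fin d) ℝ}
    (hA : Expansive A) : ∃ N : ℕ, IsTentCover A (box d N) := by
  have hdet := hA.isUnit_det
  obtain ⟨C, hC⟩ := hA.exists_nnnorm_zpow_le
  refine ⟨⌈(C : ℝ)⌉₊ + 1, fun i j k l hij ⟨y, hyk, hyl⟩ x hxk => ?_⟩
  have hq : ms (A ^ (-j)) y ∈ unitCube l := (mem_dcube_iff hdet).mp hyl
  -- both points are `A^(i-j)` applied to points of `unitCube k`, and `‖A^(i-j)‖ ≤ C`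
  have hfactor : ∀ z, ms (A ^ (-j)) z = ms (A ^ (i - j)) (ms (A ^ (-i)) z) := fun z => by
    rw [ms_zpow_ms_zpow hdet]
    congr 2
    ring
  have hdist : ∀ t, |ms (A ^ (-j)) x t - ms (A ^ (-j)) y t| ≤ ⌈(C : ℝ)⌉₊ := by
    intro t
    have hsub := abs_mulVec_apply_le (A ^ (i - j)) (abs_sub_le_one_of_mem_unitCube
      ((mem_dcube_iff hdet).mp hxk) ((mem_dcube_iff hdet).mp hyk)) t
    have hnorm : ‖A ^ (i - j)‖ ≤ C := hC _ (by omega)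
    rw [hfactor x, hfactor y]
    simp only [ms] at hsub ⊢
    rw [← Pi.sub_apply, ← Matrix.mulVec_sub]
    exact (hsub.trans hnorm).trans (Nat.le_ceil _)
  set p := ms (A ^ (-j)) x
  refine Set.mem_iUnion₂.mpr ⟨fun t => ⌊p t⌋ - l t, Fintype.mem_piFinset.mpr fun t =>
    floor_sub_mem_Icc_of_abs_sub_le (hq t).1 (hq t).2 (hdist t), (mem_dcube_iff hdet).mpr ?_⟩
  have hl : l + (fun t => ⌊p t⌋ - l t) = fun t => ⌊p t⌋ := by
    ext t
    simp
  rw [hl]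
  exact floor_mem_unitCube p

theorem ENNReal.rpow_neg_half_mul_self {v : ℝ≥0∞} (h0 : v ≠ 0) (htop : v ≠ ⊤) :
    v ^ (-(1 / 2 : ℝ)) * v = v ^ (1 / 2 : ℝ) := by
  nth_rewrite 2 [← ENNReal.rpow_one v]
  rw [← ENNReal.rpow_add _ _ h0 htop]
  norm_num

theorem ENNReal.rpow_neg_half_mul_le {v w : ℝ≥0∞} (htop : v ≠ ⊤) (hw : w ≤ v) :
    v ^ (-(1 / 2 : ℝ)) * w ≤ v ^ (1 / 2 : ℝ) := by
  rcases eq_or_ne v 0 with rfl | h0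
  · simp [nonpos_iff_eq_zero.mp hw]
  · exact (mul_le_mul_right hw _).trans (rpow_neg_half_mul_self h0 htop).le

section SequenceNorms

variable {d : ℕ} (A : Matrix (Fin d) (Fin d) ℝ) (c : ℤ → (Fin d → ℤ) → ℂ)

noncomputable def scaleSum (j : ℤ) (x : EuclideanSpace ℝ (Fin d)) : ℝ≥0∞ :=
  ∑' (i : ℤ) (k : Fin d → ℤ),
    (if i ≤ j then
      (dcube A i k).indicator
        (fun _ => volume (dcube A i k) ^ (-(1 / 2 : ℝ)) * ENNReal.ofReal (‖c i k‖)) x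
    else 0)

noncomputable def tentSum (j : ℤ) (l : Fin d → ℤ) : ℝ≥0∞ :=
  ∑' (i : ℤ) (k : Fin d → ℤ),
    (if i ≤ j ∧ 0 < volume (dcube A i k ∩ dcube A j l) then
      volume (dcube A i k) ^ (1 / 2 : ℝ) * ENNReal.ofReal (‖c i k‖)
    else 0)

theorem fNormInfOne_eq_iSup : fNormInfOne A c =
    ⨆ (j : ℤ) (l : Fin d → ℤ),
      (volume (dcube A j l))⁻¹ * ∫⁻ x in dcube A j l, scaleSum A c j x :=
  rfl

theorem tentNorm_eq_iSup : tentNorm A c =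
    ⨆ (j : ℤ) (l : Fin d → ℤ), (volume (dcube A j l))⁻¹ * tentSum A c j l :=
  rfl

theorem setLIntegral_scaleSum (j : ℤ) (l : Fin d → ℤ) :
    ∫⁻ x in dcube A j l, scaleSum A c j x =
      ∑' (i : ℤ) (k : Fin d → ℤ),
        (if i ≤ j then
          volume (dcube A i k) ^ (-(1 / 2 : ℝ)) * ENNReal.ofReal (‖c i k‖) *
            volume (dcube A i k ∩ dcube A j l)
        else 0) := by
  have hmeas : ∀ i k, Measurable fun x : EuclideanSpace ℝ (Fin d) =>
      if i ≤ j then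
        (dcube A i k).indicator
          (fun _ => volume (dcube A i k) ^ (-(1 / 2 : ℝ)) * ENNReal.ofReal (‖c i k‖)) x
      else 0 := fun i k => by
    split_ifs
    · exact measurable_const.indicator (measurableSet_dcube A i k)
    · exact measurable_const
  unfold scaleSum
  rw [lintegral_tsum fun i => (Measurable.tsum (hmeas i)).aemeasurable]
  refine tsum_congr fun i => ?_
  rw [lintegral_tsum fun k => (hmeas i k).aemeasurable]
  refine tsum_congr fun k => ?_
  split_ifs
  · rw [lintegral_indicator_const (measurableSet_dcube A i k),
      Measure.restrict_apply (measurableSet_dcube A i k)]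
  · exact lintegral_zero

theorem setLIntegral_scaleSum_le_tentSum (j : ℤ) (l : Fin d → ℤ) :
    ∫⁻ x in dcube A j l, scaleSum A c j x ≤ tentSum A c j l := by
  rw [setLIntegral_scaleSum]
  refine ENNReal.tsum_le_tsum fun i => ENNReal.tsum_le_tsum fun k => ?_
  by_cases hij : i ≤ j
  swap
  · simp [hij]
  rcases eq_zero_or_pos (volume (dcube A i k ∩ dcube A j l)) with hnull | hpos
  · simp [hnull]
  · rw [if_pos hij, if_pos ⟨hij, hpos⟩, mul_right_comm]
    exact mul_le_mul_left (ENNReal.rpow_neg_half_mul_le (volume_dcube_ne_top A i k)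
      (measure_mono Set.inter_subset_left)) _

theorem fNormInfOne_le_tentNorm : fNormInfOne A c ≤ tentNorm A c := by
  rw [fNormInfOne_eq_iSup, tentNorm_eq_iSup]
  exact iSup₂_mono fun j l => mul_le_mul_right (setLIntegral_scaleSum_le_tentSum A c j l) _

variable {A} in
theorem tentSum_le_sum_setLIntegral_scaleSum {F : Finset (Fin d → ℤ)} (hF : IsTentCover A F)
    (j : ℤ) (l : Fin d → ℤ) :
    tentSum A c j l ≤ ∑ n ∈ F, ∫⁻ x in dcube A j (l + n), scaleSum A c j x := by
  simp_rw [setLIntegral_scaleSum]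
  rw [← Summable.tsum_finsetSum fun _ _ => ENNReal.summable]
  refine ENNReal.tsum_le_tsum fun i => ?_
  rw [← Summable.tsum_finsetSum fun _ _ => ENNReal.summable]
  refine ENNReal.tsum_le_tsum fun k => ?_
  by_cases h : i ≤ j ∧ 0 < volume (dcube A i k ∩ dcube A j l)
  swap
  · rw [if_neg h]
    positivity
  obtain ⟨hij, hpos⟩ := h
  have hcover : volume (dcube A i k) ≤ ∑ n ∈ F, volume (dcube A i k ∩ dcube A j (l + n)) :=
    calc volume (dcube A i k)
        ≤ volume (⋃ n ∈ F, dcube A i k ∩ dcube A j (l + n)) := by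
          rw [← Set.inter_iUnion₂]
          exact measure_mono (Set.subset_inter le_rfl
            (hF hij (nonempty_of_measure_ne_zero hpos.ne')))
      _ ≤ _ := measure_biUnion_finset_le F _
  have h0 : volume (dcube A i k) ≠ 0 :=
    (hpos.trans_le (measure_mono Set.inter_subset_left)).ne'
  simp only [if_pos hij, if_pos (And.intro hij hpos), ← Finset.mul_sum]
  calc volume (dcube A i k) ^ (1 / 2 : ℝ) * ENNReal.ofReal ‖c i k‖
      = volume (dcube A i k) ^ (-(1 / 2 : ℝ)) * ENNReal.ofReal ‖c i k‖ *
          volume (dcube A i k) := by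
        rw [mul_right_comm, ENNReal.rpow_neg_half_mul_self h0 (volume_dcube_ne_top A i k)]
    _ ≤ _ := mul_le_mul_right hcover _

theorem setLIntegral_scaleSum_le {A : Matrix (Fin d) (Fin d) ℝ} (hA : IsUnit A.det) (j : ℤ)
    (l : Fin d → ℤ) :
    ∫⁻ x in dcube A j l, scaleSum A c j x ≤ volume (dcube A j l) * fNormInfOne A c := by
  rw [← ENNReal.inv_mul_le_iff (volume_dcube_pos hA j l).ne' (volume_dcube_ne_top A j l),
    fNormInfOne_eq_iSup]
  exact le_iSup₂ (f := fun j l => (volume (dcube A j l))⁻¹ *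
    ∫⁻ x in dcube A j l, scaleSum A c j x) j l

theorem tentNorm_le_card_mul_fNormInfOne {A : Matrix (Fin d) (Fin d) ℝ} (hA : IsUnit A.det)
    {F : Finset (Fin d → ℤ)} (hF : IsTentCover A F) :
    tentNorm A c ≤ F.card * fNormInfOne A c := by
  rw [tentNorm_eq_iSup]
  refine iSup₂_le fun j l =>
    (ENNReal.inv_mul_le_iff (volume_dcube_pos hA j l).ne' (volume_dcube_ne_top A j l)).mpr ?_
  calc tentSum A c j l
      ≤ ∑ n ∈ F, ∫⁻ x in dcube A j (l + n), scaleSum A c j x :=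
        tentSum_le_sum_setLIntegral_scaleSum c hF j l
    _ ≤ ∑ n ∈ F, volume (dcube A j l) * fNormInfOne A c := Finset.sum_le_sum fun n _ => by
        rw [volume_dcube_translate A j l (l + n)]
        exact setLIntegral_scaleSum_le c hA j (l + n)
    _ = volume (dcube A j l) * (F.card * fNormInfOne A c) := by
        rw [Finset.sum_const, nsmul_eq_mul, mul_left_comm]

end SequenceNorms

/-- The `f⁰_{∞,1}(A)` norm is equivalent to its tent form, with constants independent
of the sequence. -/
theorem stmt12 {d : ℕ} (A : Matrix (Fin d) (Fin d) ℝ) (hA : Expansive A) :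
    ∃ C : ℝ≥0∞, 0 < C ∧ C < ⊤ ∧ ∀ c : ℤ → (Fin d → ℤ) → ℂ,
      fNormInfOne A c ≤ C * tentNorm A c ∧ tentNorm A c ≤ C * fNormInfOne A c := by
  obtain ⟨N, hN⟩ := hA.exists_isTentCover_box
  have hcard : 1 ≤ ((box d N).card : ℝ≥0∞) := by
    exact_mod_cast Finset.card_pos.mpr ⟨0, zero_mem_box d N⟩
  refine ⟨(box d N).card, zero_lt_one.trans_le hcard, ENNReal.natCast_lt_top _, fun c =>
    ⟨?_, tentNorm_le_card_mul_fNormInfOne c hA.isUnit_det hN⟩⟩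
  exact (fNormInfOne_le_tentNorm A c).trans (le_mul_of_one_le_left' hcard)
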